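/- arXiv:2007.06638 — 6 statements merged into one kernel-verified Lean document; each statement's English description precedes it below -/
import Mathlib

section
/- Let a, b, m, t be integers satisfying a ≥ 1, (b − a)·m − a < a·t < (b − a)·m + a, and 1 − 2a ≤ b − a ≤ −1. Then |m + t| < |m| whenever |m| ≥ 2a, and |m + t| ≤ |m| whenever |m| < 2a. -/
/-!
The hypotheses say `|b| ≤ a - 1` and `|a (m + t) - b m| < a`.
Writing `a (m + t) = b m + (a (m + t) - b m)` gives `a |m + t| ≤ (a - 1) (|m| + 1)`,
which forces `|m + t| ≤ |m|` by integrality, and `|m + t| < |m|` as soon as `|m| ≥ a`.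
-/

theorem mul_abs_le_of_abs_le_of_abs_sub_mul_le {R : Type*} [CommRing R] [LinearOrder R]
    [IsStrictOrderedRing R] {a c e m s : R} (ha : 0 ≤ a) (hc : |c| ≤ e)
    (h : |a * s - c * m| ≤ e) : a * |s| ≤ e * (|m| + 1) :=
  calc a * |s| = |c * m + (a * s - c * m)| := by rw [add_sub_cancel, abs_mul, abs_of_nonneg ha]
    _ ≤ |c| * |m| + |a * s - c * m| := (abs_add_le _ _).trans_eq (by rw [abs_mul])
    _ ≤ e * |m| + e := by gcongr
    _ = e * (|m| + 1) := by ring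

namespace Int

variable {a x y : ℤ}

theorem le_of_mul_le_sub_one_mul_add_one (ha : 0 < a) (hy : 0 ≤ y)
    (h : a * x ≤ (a - 1) * (y + 1)) : x ≤ y := by
  have : a * x < a * (y + 1) := by linarith
  exact Int.lt_add_one_iff.mp (lt_of_mul_lt_mul_left this ha.le)

theorem lt_of_mul_le_sub_one_mul_add_one (ha : 0 < a) (hy : a ≤ y)
    (h : a * x ≤ (a - 1) * (y + 1)) : x < y := by
  have : a * x < a * y := by linarith
  exact lt_of_mul_lt_mul_left this ha.le

end Int

/-- Lemma 6.2: elementary inequality underlying the contraction estimate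
for the Katsura self-similar action. -/
theorem abs_add_lt_of_interval (a b m t : ℤ)
    (ha : 1 ≤ a)
    (h1 : (b - a) * m - a < a * t)
    (h2 : a * t < (b - a) * m + a)
    (h3 : 1 - 2 * a ≤ b - a)
    (h4 : b - a ≤ -1) :
    (2 * a ≤ |m| → |m + t| < |m|) ∧ (|m| < 2 * a → |m + t| ≤ |m|) := by
  have hb : |b| ≤ a - 1 := abs_le.mpr ⟨by linarith, by linarith⟩
  have hmt : |a * (m + t) - b * m| ≤ a - 1 :=
    Int.le_sub_one_of_lt (abs_lt.mpr ⟨by linarith, by linarith⟩)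
  have key := mul_abs_le_of_abs_le_of_abs_sub_mul_le (by omega) hb hmt
  exact ⟨fun hm => Int.lt_of_mul_le_sub_one_mul_add_one (by omega) (by omega) key,
    fun _ => Int.le_of_mul_le_sub_one_mul_add_one (by omega) (abs_nonneg m) key⟩
end

section
/- Let a, b, n, m be integers with a ≥ 1, |b| < a and 0 ≤ n < a, and let q and r be the unique integers satisfying m·b + n = q·a + r and 0 ≤ r < a (so q = (m·b + n) div a for Euclidean division by the positive integer a). Then |q| < |m| whenever |m| ≥ 2a, and |q| ≤ |m| whenever |m| < 2a. -/
/-! Writing `q * a = m * b + (n - r)` and bounding both `|b|` and `|n - r|` by `a - 1` gives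
`|q| * a ≤ (|m| + 1) * (a - 1)`. The right-hand side is below `(|m| + 1) * a`, so `|q| ≤ |m|`,
and it is below `|m| * a` as soon as `|m| ≥ a`, so then `|q| < |m|`. -/

theorem abs_mul_le_of_mul_add_eq_mul_add {R : Type*} [Ring R] [LinearOrder R] [IsStrictOrderedRing R]
    {a b c m n q r : R} (ha : 0 ≤ a) (hb : |b| ≤ c) (hnr : |n - r| ≤ c)
    (hdiv : m * b + n = q * a + r) :
    |q| * a ≤ (|m| + 1) * c := by
  have hqa : q * a = m * b + (n - r) := by rw [← add_sub_assoc, hdiv, add_sub_cancel_right]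
  calc |q| * a = |m * b + (n - r)| := by rw [← hqa, abs_mul, abs_of_nonneg ha]
    _ ≤ |m| * |b| + |n - r| := (abs_add_le _ _).trans_eq (by rw [abs_mul])
    _ ≤ |m| * c + c := add_le_add (mul_le_mul_of_nonneg_left hb (abs_nonneg m)) hnr
    _ = (|m| + 1) * c := (add_one_mul _ _).symm

theorem abs_quotient_le_general (a b n m q r : ℤ)
    (hb : |b| < a) (hn0 : 0 ≤ n) (hna : n < a)
    (hdiv : m * b + n = q * a + r) (hr0 : 0 ≤ r) (hra : r < a) :
    (2 * a ≤ |m| → |q| < |m|) ∧ (|m| < 2 * a → |q| ≤ |m|) := by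
  have ha : 0 < a := (abs_nonneg b).trans_lt hb
  have hbound : |q| * a ≤ (|m| + 1) * (a - 1) :=
    abs_mul_le_of_mul_add_eq_mul_add ha.le (Int.le_sub_one_iff.mpr hb)
      (Int.le_sub_one_iff.mpr (abs_sub_lt_of_nonneg_of_lt hn0 hna hr0 hra)) hdiv
  refine ⟨fun hm => ?_, fun _ => ?_⟩
  · exact lt_of_mul_lt_mul_right (hbound.trans_lt (by nlinarith)) ha.le
  · exact Int.lt_add_one_iff.mp
      (lt_of_mul_lt_mul_right (hbound.trans_lt (by nlinarith [abs_nonneg m])) ha.le)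

/-- Lemma 6.3: if `q` and `r` are the unique integers with
`m * b + n = q * a + r` and `0 ≤ r < a`, where `a ≥ 1`, `|b| < a`,
`0 ≤ n < a`, then `|q| < |m|` when `|m| ≥ 2a` and `|q| ≤ |m|` when
`|m| < 2a`. -/
theorem abs_quotient_le (a b n m q r : ℤ)
    (ha : 1 ≤ a) (hb : |b| < a) (hn0 : 0 ≤ n) (hna : n < a)
    (hdiv : m * b + n = q * a + r) (hr0 : 0 ≤ r) (hra : r < a) :
    (2 * a ≤ |m| → |q| < |m|) ∧ (|m| < 2 * a → |q| ≤ |m|) :=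
  abs_quotient_le_general a b n m q r hb hn0 hna hdiv hr0 hra
end

section
/- Let a, b, n, m, R be integers with a ≥ 1, |b| < a, 0 ≤ n < a and 2a ≤ R, and let q = (m·b + n) div a be the unique integer with m·b + n = q·a + r for some r with 0 ≤ r < a. Then: (i) if |m| ≤ R then |q| ≤ R, and (ii) if |m| > R then |q| < |m|. -/
/-!
Writing `q * a = m * b + (n - r)`, both `|b|` and `|n - r|` are at most `a - 1`, so
`|q| * a ≤ (|m| + 1) * (a - 1)`. The right-hand side is below `(|m| + 1) * a`, which forces
`|q| ≤ |m|`, and it is below `|m| * a` as soon as `a ≤ |m|`, which forces `|q| < |m|`.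
-/

section DivisionStep

variable {a b n m q r : ℤ}

theorem abs_mul_le_of_mul_add_eq_mul_add_s2 (hdiv : m * b + n = q * a + r) (hb : |b| < a)
    (hn : 0 ≤ n) (hna : n < a) (hr : 0 ≤ r) (hra : r < a) :
    |q| * a ≤ (|m| + 1) * (a - 1) := by
  have ha : 0 < a := (abs_nonneg b).trans_lt hb
  have hnr : |n - r| ≤ a - 1 := Int.le_sub_one_of_lt (abs_sub_lt_of_nonneg_of_lt hn hna hr hra)
  calc |q| * a = |m * b + (n - r)| := by
        rw [← abs_of_pos ha, ← abs_mul]; congr 1; linarith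
    _ ≤ |m| * |b| + |n - r| := (abs_add_le _ _).trans_eq (by rw [abs_mul])
    _ ≤ |m| * (a - 1) + (a - 1) := by
        gcongr
        exact Int.le_sub_one_of_lt hb
    _ = (|m| + 1) * (a - 1) := by ring

theorem abs_le_abs_of_mul_add_eq_mul_add (hdiv : m * b + n = q * a + r) (hb : |b| < a)
    (hn : 0 ≤ n) (hna : n < a) (hr : 0 ≤ r) (hra : r < a) :
    |q| ≤ |m| := by
  have ha : 0 < a := (abs_nonneg b).trans_lt hb
  have hlt : |q| * a < (|m| + 1) * a := by
    nlinarith [abs_mul_le_of_mul_add_eq_mul_add_s2 hdiv hb hn hna hr hra, abs_nonneg m]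
  exact Int.lt_add_one_iff.mp (lt_of_mul_lt_mul_right hlt ha.le)

theorem abs_lt_abs_of_mul_add_eq_mul_add (hdiv : m * b + n = q * a + r) (hb : |b| < a)
    (hn : 0 ≤ n) (hna : n < a) (hr : 0 ≤ r) (hra : r < a) (hm : a ≤ |m|) :
    |q| < |m| := by
  have ha : 0 < a := (abs_nonneg b).trans_lt hb
  have hlt : |q| * a < |m| * a := by
    nlinarith [abs_mul_le_of_mul_add_eq_mul_add_s2 hdiv hb hn hna hr hra]
  exact lt_of_mul_lt_mul_right hlt ha.le

end DivisionStep

theorem cocycle_step_estimate_general (a b n m R q r : ℤ)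
    (hb : |b| < a) (hn0 : 0 ≤ n) (hna : n < a)
    (hR : 2 * a ≤ R)
    (hdiv : m * b + n = q * a + r) (hr0 : 0 ≤ r) (hra : r < a) :
    (|m| ≤ R → |q| ≤ R) ∧ (R < |m| → |q| < |m|) := by
  have ha : 0 ≤ a := (abs_nonneg b).trans hb.le
  exact ⟨fun hm => (abs_le_abs_of_mul_add_eq_mul_add hdiv hb hn0 hna hr0 hra).trans hm,
    fun hm => abs_lt_abs_of_mul_add_eq_mul_add hdiv hb hn0 hna hr0 hra (by linarith)⟩

/-- One-step invariance/decrease estimate used in Proposition 6.4: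
if `q` and `r` are the unique integers with `m * b + n = q * a + r`,
`0 ≤ r < a`, where `a ≥ 1`, `|b| < a`, `0 ≤ n < a` and `2a ≤ R`, then
(i) `|m| ≤ R → |q| ≤ R` and (ii) `|m| > R → |q| < |m|`. -/
theorem cocycle_step_estimate (a b n m R q r : ℤ)
    (ha : 1 ≤ a) (hb : |b| < a) (hn0 : 0 ≤ n) (hna : n < a)
    (hR : 2 * a ≤ R)
    (hdiv : m * b + n = q * a + r) (hr0 : 0 ≤ r) (hra : r < a) :
    (|m| ≤ R → |q| ≤ R) ∧ (R < |m| → |q| < |m|) :=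
  cocycle_step_estimate_general a b n m R q r hb hn0 hna hR hdiv hr0 hra
end

section
/- Let R ∈ ℤ and let (a_k)_{k∈ℕ}, (b_k)_{k∈ℕ}, (n_k)_{k∈ℕ} be sequences of integers such that for every k: 1 ≤ a_k, 2a_k ≤ R, |b_k| < a_k and 0 ≤ n_k < a_k. Define a sequence (m_k)_{k∈ℕ} of integers by an arbitrary m_0 ∈ ℤ and m_{k+1} = (m_k·b_k + n_k) div a_k, i.e. m_{k+1} is the unique integer q with m_k·b_k + n_k = q·a_k + r for some r with 0 ≤ r < a_k. Then |m_k| ≤ R for every k ≥ |m_0|. -/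
/-!
Write `m * b + n = q * a + r` with `|b| < a` and `0 ≤ n, r < a`. Then
`|q| * a ≤ |m| * (a - 1) + (a - 1)`, which forces `|q| ≤ |m| - 1` as soon as `|m| ≥ 2a - 1`
and `|q| ≤ 2a - 2` otherwise. So along the sequence, `|m k|` drops by at least one at every
step until it enters `[0, R]`, and never leaves that interval again; after `|m 0|` steps it is
there.
-/

lemma abs_le_max_of_mul_add_eq_mul_add {a b n m q r : ℤ} (hb : |b| < a) (hn : 0 ≤ n ∧ n < a)
    (hr₀ : 0 ≤ r) (hr : r < a) (h : m * b + n = q * a + r) :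
    |q| ≤ max (|m| - 1) (2 * a - 2) := by
  have ha : 0 < a := (abs_nonneg b).trans_lt hb
  have hqa : |q| * a ≤ (|m| + 1) * (a - 1) :=
    calc |q| * a = |m * b + (n - r)| := by rw [← abs_of_pos ha, ← abs_mul]; congr 1; linarith
      _ ≤ |m| * |b| + |n - r| := by rw [← abs_mul]; exact abs_add_le _ _
      _ ≤ |m| * (a - 1) + (a - 1) := by
          gcongr
          · linarith
          · rw [abs_le]; constructor <;> linarith
      _ = (|m| + 1) * (a - 1) := by ring
  rcases le_or_gt |m| (2 * a - 2) with hsmall | hbig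
  · refine le_max_of_le_right (le_of_mul_le_mul_right ?_ ha)
    nlinarith
  · refine le_max_of_le_left (le_of_mul_le_mul_right ?_ ha)
    nlinarith

lemma le_max_sub_of_forall_succ_le_max_sub_one {u : ℕ → ℤ} {R : ℤ}
    (h : ∀ k, u (k + 1) ≤ max (u k - 1) R) (k : ℕ) : u k ≤ max (u 0 - k) R := by
  induction k with
  | zero => simp
  | succ k ih =>
    have := h k
    push_cast
    omega

theorem cocycle_contracting_general (R : ℤ) (a b n m : ℕ → ℤ)
    (haR : ∀ k, 2 * a k ≤ R)
    (hb : ∀ k, |b k| < a k)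
    (hn : ∀ k, 0 ≤ n k ∧ n k < a k)
    (hm : ∀ k, ∃ r : ℤ, 0 ≤ r ∧ r < a k ∧
      m k * b k + n k = m (k + 1) * a k + r) :
    ∀ k : ℕ, |m 0| ≤ (k : ℤ) → |m k| ≤ R := by
  have hR : 0 ≤ R := by linarith [haR 0, (abs_nonneg (b 0)).trans_lt (hb 0)]
  have step (j : ℕ) : |m (j + 1)| ≤ max (|m j| - 1) R := by
    obtain ⟨r, hr₀, hr, h⟩ := hm j
    exact (abs_le_max_of_mul_add_eq_mul_add (hb j) (hn j) hr₀ hr h).trans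
      (max_le_max le_rfl (by linarith [haR j]))
  intro k hk
  calc |m k| ≤ max (|m 0| - k) R := le_max_sub_of_forall_succ_le_max_sub_one step k
    _ = R := max_eq_right (by linarith)

/-- Proposition 6.4 (arithmetic content): iterating the cocycle quotient
map along parameters `a k ≥ 1`, `2 * a k ≤ R`, `|b k| < a k`,
`0 ≤ n k < a k`, starting from any `m 0`, the sequence satisfies
`|m k| ≤ R` for every `k ≥ |m 0|`. -/
theorem cocycle_contracting (R : ℤ) (a b n m : ℕ → ℤ)
    (ha : ∀ k, 1 ≤ a k) (haR : ∀ k, 2 * a k ≤ R)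
    (hb : ∀ k, |b k| < a k)
    (hn : ∀ k, 0 ≤ n k ∧ n k < a k)
    (hm : ∀ k, ∃ r : ℤ, 0 ≤ r ∧ r < a k ∧
      m k * b k + n k = m (k + 1) * a k + r) :
    ∀ k : ℕ, |m 0| ≤ (k : ℤ) → |m k| ≤ R :=
  cocycle_contracting_general R a b n m haR hb hn hm
end

section
/- Fix sequences of integers a_t ≥ 1 and b_t (t ∈ ℕ). For a list μ = (n_1, …, n_k) of integers with 0 ≤ n_t < a_t for each t, define recursively φ(m, μ) ∈ ℤ and κ_m(μ) (a list of the same length) by: φ(m, ()) = m for the empty list (by convention φ(m, μ) is the value of m after processing all entries), and at stage t the pair (m, n_t) is replaced by (q_t, r_t) where m·b_t + n_t = q_t·a_t + r_t with 0 ≤ r_t < a_t; κ_m(μ) is the list (r_1, …, r_k) of produced remainders and φ(m, μ) is the final quotient. Then for all m₁, m₂ ∈ ℤ and every such list μ: φ(m₁ + m₂, μ) = φ(m₁, κ_{m₂}(μ)) + φ(m₂, μ), and κ_{m₁+m₂}(μ) = κ_{m₁}(κ_{m₂}(μ)). -/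
/-!
Stage `t` is a Euclidean division by `a t`, and division is additive up to a carried remainder:
`(x + y) / c = (x + y % c) / c + y / c` and `(x + y) % c = (x + y % c) % c`. With `x = m₁ b_t` and
`y = m₂ b_t + n_t`, the stage for `m₁ + m₂` produces the same remainder as the stage for `m₂`
followed by the stage for `m₁` on its output, and its quotient is the sum of their quotients.
Induction along the list carries this to the whole path.
-/

/-- Process a list of edge indices `μ = (n_1, …, n_k)` starting at stage `t`
and with current group element `m`: at each stage the pair `(m, n_t)` is
replaced by the quotient/remainder pair `(q_t, r_t)` of the Euclidean
division `m * b_t + n_t = q_t * a_t + r_t`, `0 ≤ r_t < a_t`.  The result is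
`(φ(m, μ), κ_m(μ))`: the final quotient together with the list of produced
remainders. -/
def selfSimRun (a b : ℕ → ℤ) : ℕ → ℤ → List ℤ → ℤ × List ℤ
  | _, m, [] => (m, [])
  | t, m, n :: ns =>
    let q := Int.ediv (m * b t + n) (a t)
    let r := Int.emod (m * b t + n) (a t)
    let p := selfSimRun a b (t + 1) q ns
    (p.1, r :: p.2)

theorem Int.add_ediv_eq_add_emod_ediv_add_ediv (x y c : ℤ) :
    (x + y) / c = (x + y % c) / c + y / c := by
  rcases eq_or_ne c 0 with rfl | hc
  · simp
  · conv_lhs => rw [← Int.emod_add_mul_ediv y c, ← add_assoc]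
    exact Int.add_mul_ediv_left _ _ hc

theorem selfSimRun_cons (a b : ℕ → ℤ) (t : ℕ) (m n : ℤ) (ns : List ℤ) :
    selfSimRun a b t m (n :: ns) =
      ((selfSimRun a b (t + 1) ((m * b t + n) / a t) ns).1,
        (m * b t + n) % a t :: (selfSimRun a b (t + 1) ((m * b t + n) / a t) ns).2) :=
  rfl

theorem selfSimRun_add (a b : ℕ → ℤ) (μ : List ℤ) (t : ℕ) (m₁ m₂ : ℤ) :
    (selfSimRun a b t (m₁ + m₂) μ).1 =
      (selfSimRun a b t m₁ (selfSimRun a b t m₂ μ).2).1 + (selfSimRun a b t m₂ μ).1 ∧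
    (selfSimRun a b t (m₁ + m₂) μ).2 =
      (selfSimRun a b t m₁ (selfSimRun a b t m₂ μ).2).2 := by
  induction μ generalizing t m₁ m₂ with
  | nil => simp [selfSimRun]
  | cons n ns ih =>
    have hsum : (m₁ + m₂) * b t + n = m₁ * b t + (m₂ * b t + n) := by ring
    have hq : ((m₁ + m₂) * b t + n) / a t
        = (m₁ * b t + (m₂ * b t + n) % a t) / a t + (m₂ * b t + n) / a t := by
      rw [hsum, Int.add_ediv_eq_add_emod_ediv_add_ediv]
    have hr : ((m₁ + m₂) * b t + n) % a t = (m₁ * b t + (m₂ * b t + n) % a t) % a t := by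
      rw [hsum, Int.add_emod_emod]
    obtain ⟨hφ, hκ⟩ := ih (t + 1) ((m₁ * b t + (m₂ * b t + n) % a t) / a t)
      ((m₂ * b t + n) / a t)
    simp only [selfSimRun_cons, hq, hr]
    exact ⟨hφ, by rw [hκ]⟩

theorem selfSim_cocycle_identity_general (a b : ℕ → ℤ)
    (m₁ m₂ : ℤ) (μ : List ℤ) :
    (selfSimRun a b 0 (m₁ + m₂) μ).1 =
      (selfSimRun a b 0 m₁ (selfSimRun a b 0 m₂ μ).2).1
        + (selfSimRun a b 0 m₂ μ).1 ∧
    (selfSimRun a b 0 (m₁ + m₂) μ).2 =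
      (selfSimRun a b 0 m₁ (selfSimRun a b 0 m₂ μ).2).2 :=
  selfSimRun_add a b μ 0 m₁ m₂

/-- Path-level cocycle identity and group-action property (Section 3):
`φ(m₁ + m₂, μ) = φ(m₁, κ_{m₂}(μ)) + φ(m₂, μ)` and
`κ_{m₁+m₂}(μ) = κ_{m₁}(κ_{m₂}(μ))`. -/
theorem selfSim_cocycle_identity (a b : ℕ → ℤ) (ha : ∀ t, 1 ≤ a t)
    (m₁ m₂ : ℤ) (μ : List ℤ)
    (hμ : ∀ i : Fin μ.length, 0 ≤ μ.get i ∧ μ.get i < a i) :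
    (selfSimRun a b 0 (m₁ + m₂) μ).1 =
      (selfSimRun a b 0 m₁ (selfSimRun a b 0 m₂ μ).2).1
        + (selfSimRun a b 0 m₂ μ).1 ∧
    (selfSimRun a b 0 (m₁ + m₂) μ).2 =
      (selfSimRun a b 0 m₁ (selfSimRun a b 0 m₂ μ).2).2 :=
  selfSim_cocycle_identity_general a b m₁ m₂ μ
end

section
/- Let N ≥ 1 and let A be an N×N matrix with entries in ℕ such that A is irreducible (for all indices i, j there exists k ≥ 1 with (A^k)_{i,j} > 0) and A is not a permutation matrix, in the sense that some row has sum at least 2 (there exists i with ∑_j A_{i,j} ≥ 2). Then for every K ∈ ℕ there exists n ≥ 1 such that every column sum of A^n is at least K, i.e. ∑_i (A^n)_{i,j} ≥ K for every j. -/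
/-- For a finite irreducible non-permutation matrix `A` over `ℕ`
(adjacency matrix of the graph `E_A`), for every `K` there is `n ≥ 1`
such that every column sum of `A ^ n` is at least `K`; equivalently,
`|E_A^n v| ≥ K` for every vertex `v`. -/
theorem column_sums_large_of_irreducible (N : ℕ) (hN : 1 ≤ N)
    (A : Matrix (Fin N) (Fin N) ℕ)
    (hirr : ∀ i j : Fin N, ∃ k : ℕ, 1 ≤ k ∧ 0 < (A ^ k) i j)
    (hnp : ∃ i : Fin N, 2 ≤ ∑ j : Fin N, A i j) :
    ∀ K : ℕ, ∃ n : ℕ, 1 ≤ n ∧ ∀ j : Fin N, K ≤ ∑ i : Fin N, (A ^ n) i j := by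
  -- decomposition of column sums of A^(a+b)
  have hdec : ∀ (a b : ℕ) (j : Fin N),
      (∑ i : Fin N, (A ^ (a + b)) i j)
        = ∑ w : Fin N, (∑ i : Fin N, (A ^ a) i w) * (A ^ b) w j := by
    intro a b j
    rw [pow_add]
    simp only [Matrix.mul_apply]
    rw [Finset.sum_comm]
    simp [Finset.sum_mul]
  -- every column of A has positive sum
  have hcol1 : ∀ j : Fin N, 1 ≤ ∑ i : Fin N, A i j := by
    intro j
    obtain ⟨k, hk1, hkpos⟩ := hirr j j
    obtain ⟨k', rfl⟩ : ∃ k', k = k' + 1 := ⟨k - 1, by omega⟩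
    rw [pow_succ, Matrix.mul_apply] at hkpos
    obtain ⟨w, -, hw⟩ := Finset.exists_ne_zero_of_sum_ne_zero hkpos.ne'
    have hA : 1 ≤ A w j := by
      rcases Nat.eq_zero_or_pos (A w j) with h | h
      · simp [h] at hw
      · exact h
    calc 1 ≤ A w j := hA
      _ ≤ ∑ i : Fin N, A i j :=
          Finset.single_le_sum (f := fun i => A i j) (fun _ _ => Nat.zero_le _)
            (Finset.mem_univ w)
  -- every row of A has positive sum
  have hrow1 : ∀ w : Fin N, 1 ≤ ∑ j : Fin N, A w j := by
    intro w
    obtain ⟨k, hk1, hkpos⟩ := hirr w w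
    obtain ⟨k', rfl⟩ : ∃ k', k = k' + 1 := ⟨k - 1, by omega⟩
    rw [pow_succ', Matrix.mul_apply] at hkpos
    obtain ⟨u, -, hu⟩ := Finset.exists_ne_zero_of_sum_ne_zero hkpos.ne'
    have hA : 1 ≤ A w u := by
      rcases Nat.eq_zero_or_pos (A w u) with h | h
      · simp [h] at hu
      · exact h
    calc 1 ≤ A w u := hA
      _ ≤ ∑ j : Fin N, A w j :=
          Finset.single_le_sum (f := fun j => A w j) (fun _ _ => Nat.zero_le _)
            (Finset.mem_univ u)
  -- every column sum of A^n is positive for n ≥ 1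
  have hcolpos : ∀ n : ℕ, 1 ≤ n → ∀ j : Fin N, 1 ≤ ∑ i : Fin N, (A ^ n) i j := by
    intro n hn
    induction n, hn using Nat.le_induction with
    | base => simpa using hcol1
    | succ n hn ih =>
      intro j
      rw [hdec n 1 j]
      calc 1 ≤ ∑ w : Fin N, (A ^ 1) w j := by simpa using hcol1 j
        _ ≤ ∑ w : Fin N, (∑ i : Fin N, (A ^ n) i w) * (A ^ 1) w j := by
            apply Finset.sum_le_sum
            intro w _
            exact Nat.le_mul_of_pos_left _ (ih w)
  -- prefix monotonicity
  have hmono : ∀ (a b : ℕ), 1 ≤ a → ∀ j : Fin N,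
      (∑ i : Fin N, (A ^ b) i j) ≤ ∑ i : Fin N, (A ^ (a + b)) i j := by
    intro a b ha j
    rw [hdec a b j]
    apply Finset.sum_le_sum
    intro w _
    exact Nat.le_mul_of_pos_left _ (hcolpos a ha w)
  -- single-term lower bound
  have hsingle : ∀ (n k : ℕ) (v j : Fin N),
      (∑ i : Fin N, (A ^ n) i v) * (A ^ k) v j ≤ ∑ i : Fin N, (A ^ (n + k)) i j := by
    intro n k v j
    rw [hdec n k j]
    exact Finset.single_le_sum (f := fun w => (∑ i : Fin N, (A ^ n) i w) * (A ^ k) w j)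
      (fun _ _ => Nat.zero_le _) (Finset.mem_univ v)
  -- total number of paths grows at least linearly
  obtain ⟨i₀, hi₀⟩ := hnp
  have htotal : ∀ n : ℕ, 1 ≤ n → n ≤ ∑ j : Fin N, ∑ i : Fin N, (A ^ n) i j := by
    intro n hn
    induction n, hn using Nat.le_induction with
    | base =>
      calc 1 ≤ ∑ i : Fin N, (A ^ 1) i i₀ := hcolpos 1 le_rfl i₀
        _ ≤ ∑ j : Fin N, ∑ i : Fin N, (A ^ 1) i j :=
            Finset.single_le_sum (f := fun j => ∑ i : Fin N, (A ^ 1) i j)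
              (fun _ _ => Nat.zero_le _) (Finset.mem_univ i₀)
    | succ n hn ih =>
      have key : ∑ j : Fin N, ∑ i : Fin N, (A ^ (n + 1)) i j
          = ∑ w : Fin N, (∑ i : Fin N, (A ^ n) i w) * (∑ j : Fin N, A w j) := by
        simp only [hdec n 1]
        rw [Finset.sum_comm]
        simp [Finset.mul_sum]
      have hstep : (∑ w : Fin N,
            (∑ i : Fin N, (A ^ n) i w) * (1 + if w = i₀ then 1 else 0))
          ≤ ∑ w : Fin N, (∑ i : Fin N, (A ^ n) i w) * (∑ j : Fin N, A w j) := by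
        apply Finset.sum_le_sum
        intro w _
        apply Nat.mul_le_mul_left
        by_cases hw : w = i₀
        · subst hw; simpa using hi₀
        · simpa [hw] using hrow1 w
      have heq : (∑ w : Fin N,
            (∑ i : Fin N, (A ^ n) i w) * (1 + if w = i₀ then 1 else 0))
          = (∑ w : Fin N, ∑ i : Fin N, (A ^ n) i w) + ∑ i : Fin N, (A ^ n) i i₀ := by
        simp [mul_add, Finset.sum_add_distrib, mul_ite, Finset.sum_ite_eq']
      have h1 : 1 ≤ ∑ i : Fin N, (A ^ n) i i₀ := hcolpos n hn i₀
      rw [key]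
      calc n + 1 ≤ (∑ w : Fin N, ∑ i : Fin N, (A ^ n) i w)
            + ∑ i : Fin N, (A ^ n) i i₀ := by omega
        _ = ∑ w : Fin N,
            (∑ i : Fin N, (A ^ n) i w) * (1 + if w = i₀ then 1 else 0) := heq.symm
        _ ≤ _ := hstep
  -- main argument
  intro K
  set n := N * (K + 1) with hn_def
  have hn1 : 1 ≤ n := by
    have := Nat.mul_le_mul hN (Nat.succ_le_succ (Nat.zero_le K))
    simpa [hn_def] using Nat.one_le_iff_ne_zero.mpr (by positivity)
  -- pigeonhole: some column sum of A^n is at least K+1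
  have hpigeon : ∃ v : Fin N, K + 1 ≤ ∑ i : Fin N, (A ^ n) i v := by
    by_contra h
    push_neg at h
    have hle : ∑ v : Fin N, ∑ i : Fin N, (A ^ n) i v ≤ ∑ _v : Fin N, K :=
      Finset.sum_le_sum fun v _ => Nat.lt_succ_iff.mp (h v)
    have h2 := htotal n hn1
    have hexp : n = N * K + N := by rw [hn_def]; ring
    simp only [Finset.sum_const, Finset.card_univ, Fintype.card_fin, smul_eq_mul] at hle
    omega
  obtain ⟨v, hv⟩ := hpigeon
  choose k hk1 hk2 using fun j => hirr v j
  set M := (Finset.univ.sup k) + 1 with hM_def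
  refine ⟨n + M, by omega, fun j => ?_⟩
  have hkM : k j + 1 ≤ M := by
    have := Finset.le_sup (f := k) (Finset.mem_univ j)
    omega
  have h1 : (∑ i : Fin N, (A ^ (n + k j)) i j) ≤ ∑ i : Fin N, (A ^ (n + M)) i j := by
    have := hmono (M - k j) (n + k j) (by omega) j
    rwa [show M - k j + (n + k j) = n + M by omega] at this
  have h2 : K + 1 ≤ ∑ i : Fin N, (A ^ (n + k j)) i j := by
    have h3 := hsingle n (k j) v j
    have h4 : K + 1 ≤ (∑ i : Fin N, (A ^ n) i v) * (A ^ (k j)) v j := by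
      calc K + 1 ≤ (∑ i : Fin N, (A ^ n) i v) * 1 := by simpa using hv
        _ ≤ _ := Nat.mul_le_mul_left _ (hk2 j)
    omega
  omega
end
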